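/- Let 0 < ε ≤ 1/3, let a₀ > 0, and let Q and Q₀ be 3×3 real symmetric traceless matrices with λ_min(Q) ≥ −1/3 + ε and λ_min(Q₀) ≥ −1/3 + ε. Set L = a₀(Q + (1/3)I), L₀ = a₀(Q₀ + (1/3)I), and for any invertible 3×3 real matrix F set G = L^{-1/2} F L₀^{1/2}. Then |adj G| ≥ (ε/3) · |adj F|. -/

import Mathlib

/-! With `S = L^{1/2}`, `S₀ = L₀^{1/2}` and `N = adj F` one has
`adj G = (det S₀ / det S) • S₀⁻¹ N S`. For `ℓ = λ_min(L)` and `m = λ_max(L₀)`,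
`ℓ |N|² ≤ |N S|² = |S₀ (S₀⁻¹ N S)|² ≤ m |S₀⁻¹ N S|²`.
Put `α = ε a₀` and `β = (1 - 2ε) a₀`. Then `α ≤ L₀`, and `L ≤ β` because `Q` is traceless, so
`det L ≤ ℓ β²` and `det L₀ ≥ m α²`. The factors `ℓ` and `m` cancel, leaving
`α |adj F| ≤ β |adj G|`, and `α / β ≥ ε`. -/

open Matrix

/-- Frobenius norm of a 3×3 real matrix: |M| = √(tr(Mᵀ M)). -/
noncomputable def frobNorm (M : Matrix (Fin 3) (Fin 3) ℝ) : ℝ :=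
  Real.sqrt (Matrix.trace (Mᵀ * M))

/-- Smallest eigenvalue of a symmetric (Hermitian) real matrix. -/
noncomputable def lMin {M : Matrix (Fin 3) (Fin 3) ℝ} (h : M.IsHermitian) : ℝ :=
  ⨅ i, h.eigenvalues i

/-- Largest eigenvalue of a symmetric (Hermitian) real matrix. -/
noncomputable def lMax {M : Matrix (Fin 3) (Fin 3) ℝ} (h : M.IsHermitian) : ℝ :=
  ⨆ i, h.eigenvalues i

/-- The unique symmetric positive (semi)definite square root of a positive definite matrix. -/
noncomputable def msqrt {M : Matrix (Fin 3) (Fin 3) ℝ} (h : M.PosDef) : Matrix (Fin 3) (Fin 3) ℝ :=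
  h.posSemidef.1.eigenvectorUnitary.1 * diagonal ((↑) ∘ (√·) ∘ h.posSemidef.1.eigenvalues) *
    (star h.posSemidef.1.eigenvectorUnitary : Matrix (Fin 3) (Fin 3) ℝ)

open scoped MatrixOrder

section Spectrum

variable {n : Type*} [Fintype n] [DecidableEq n] {A : Matrix n n ℝ}

lemma Matrix.IsHermitian.algebraMap_le_iff (hA : A.IsHermitian) {c : ℝ} :
    algebraMap ℝ _ c ≤ A ↔ ∀ i, c ≤ hA.eigenvalues i := by
  rw [algebraMap_le_iff_le_spectrum hA.isSelfAdjoint, hA.spectrum_real_eq_range_eigenvalues,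
    Set.forall_mem_range]

lemma Matrix.IsHermitian.le_algebraMap_iff (hA : A.IsHermitian) {c : ℝ} :
    A ≤ algebraMap ℝ _ c ↔ ∀ i, hA.eigenvalues i ≤ c := by
  rw [le_algebraMap_iff_spectrum_le hA.isSelfAdjoint, hA.spectrum_real_eq_range_eigenvalues,
    Set.forall_mem_range]

end Spectrum

section Products

variable {ι : Type*} [Fintype ι] [DecidableEq ι] {f : ι → ℝ}

lemma Finset.prod_le_mul_pow_of_le {b : ℝ} (hf : ∀ i, 0 ≤ f i) (hb : ∀ i, f i ≤ b) (j : ι) :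
    ∏ i, f i ≤ f j * b ^ (Fintype.card ι - 1) := by
  rw [← Finset.mul_prod_erase _ _ (Finset.mem_univ j), ← Finset.card_univ,
    ← Finset.card_erase_of_mem (Finset.mem_univ j)]
  gcongr
  · exact hf j
  · exact (Finset.prod_le_prod (fun i _ => hf i) fun i _ => hb i).trans_eq (Finset.prod_const b)

lemma Finset.mul_pow_le_prod_of_le {a : ℝ} (ha : 0 ≤ a) (hf : ∀ i, a ≤ f i) (j : ι) :
    f j * a ^ (Fintype.card ι - 1) ≤ ∏ i, f i := by
  rw [← Finset.mul_prod_erase _ _ (Finset.mem_univ j), ← Finset.card_univ,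
    ← Finset.card_erase_of_mem (Finset.mem_univ j)]
  gcongr
  · exact ha.trans (hf j)
  · exact (Finset.prod_const a).symm.trans_le (Finset.prod_le_prod (fun _ _ => ha) fun i _ => hf i)

end Products

section ExtremeEigenvalues

variable {M : Matrix (Fin 3) (Fin 3) ℝ}

lemma lMin_le_eigenvalues (h : M.IsHermitian) (i : Fin 3) : lMin h ≤ h.eigenvalues i :=
  ciInf_le (Set.finite_range _).bddBelow i

lemma eigenvalues_le_lMax (h : M.IsHermitian) (i : Fin 3) : h.eigenvalues i ≤ lMax h :=
  le_ciSup (Set.finite_range _).bddAbove i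

lemma exists_eigenvalues_eq_lMin (h : M.IsHermitian) : ∃ i, h.eigenvalues i = lMin h :=
  exists_eq_ciInf_of_finite

lemma exists_eigenvalues_eq_lMax (h : M.IsHermitian) : ∃ i, h.eigenvalues i = lMax h :=
  exists_eq_ciSup_of_finite

lemma algebraMap_le_iff_le_lMin (h : M.IsHermitian) {c : ℝ} :
    algebraMap ℝ _ c ≤ M ↔ c ≤ lMin h := by
  rw [h.algebraMap_le_iff]
  exact ⟨fun hc => le_ciInf hc, fun hc i => hc.trans (lMin_le_eigenvalues h i)⟩

lemma le_algebraMap_iff_lMax_le (h : M.IsHermitian) {c : ℝ} :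
    M ≤ algebraMap ℝ _ c ↔ lMax h ≤ c := by
  rw [h.le_algebraMap_iff]
  exact ⟨fun hc => ciSup_le hc, fun hc i => (eigenvalues_le_lMax h i).trans hc⟩

lemma det_le_lMin_mul_sq (h : M.PosSemidef) {β : ℝ} (hβ : M ≤ algebraMap ℝ _ β) :
    M.det ≤ lMin h.1 * β ^ 2 := by
  obtain ⟨j, hj⟩ := exists_eigenvalues_eq_lMin h.1
  rw [h.1.det_eq_prod_eigenvalues, ← hj]
  exact Finset.prod_le_mul_pow_of_le h.eigenvalues_nonneg (h.1.le_algebraMap_iff.1 hβ) j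

lemma lMax_mul_sq_le_det (h : M.IsHermitian) {α : ℝ} (hα : 0 ≤ α) (hαM : algebraMap ℝ _ α ≤ M) :
    lMax h * α ^ 2 ≤ M.det := by
  obtain ⟨k, hk⟩ := exists_eigenvalues_eq_lMax h
  rw [h.det_eq_prod_eigenvalues, ← hk]
  exact Finset.mul_pow_le_prod_of_le hα (h.algebraMap_le_iff.1 hαM) k

end ExtremeEigenvalues

lemma le_algebraMap_of_trace_eq_zero {M : Matrix (Fin 3) (Fin 3) ℝ} (h : M.IsHermitian)
    (htr : M.trace = 0) {c : ℝ} (hc : c ≤ lMin h) : M ≤ algebraMap ℝ _ (-2 * c) := by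
  have hsum : ∑ i, h.eigenvalues i = 0 := by
    simpa [htr] using h.trace_eq_sum_eigenvalues.symm
  have hlow i := hc.trans (lMin_le_eigenvalues h i)
  rw [Fin.sum_univ_three] at hsum
  refine h.le_algebraMap_iff.2 fun i => ?_
  match i with
  | 0 | 1 | 2 => linarith [hlow 0, hlow 1, hlow 2]

section Sqrt

variable {n : Type*} [Fintype n] [DecidableEq n]

lemma transpose_sqrt (L : Matrix n n ℝ) : (CFC.sqrt L)ᵀ = CFC.sqrt L :=
  (isHermitian_iff_isSymm.1 (nonneg_iff_posSemidef.1 (CFC.sqrt_nonneg L)).1).eq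

variable {L : Matrix n n ℝ}

lemma sq_det_sqrt (hL : 0 ≤ L) : (CFC.sqrt L).det ^ 2 = L.det := by
  rw [sq, ← det_mul, CFC.sqrt_mul_sqrt_self L hL]

lemma det_sqrt_pos (hL : L.PosDef) : 0 < (CFC.sqrt L).det := by
  have hdet := sq_det_sqrt hL.posSemidef.nonneg
  refine (nonneg_iff_posSemidef.1 (CFC.sqrt_nonneg L)).det_nonneg.lt_of_ne fun h => ?_
  rw [← h, zero_pow two_ne_zero] at hdet
  exact hL.det_pos.ne hdet

end Sqrt

lemma msqrt_eq_sqrt {M : Matrix (Fin 3) (Fin 3) ℝ} (h : M.PosDef) : msqrt h = CFC.sqrt M := by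
  rw [CFC.sqrt_eq_cfc, cfc_nnreal_eq_real _ M h.posSemidef.nonneg, h.posSemidef.1.cfc_eq]
  simp [IsHermitian.cfc, msqrt, Function.comp_def, Unitary.conjStarAlgAut_apply,
    h.posSemidef.eigenvalues_nonneg]

lemma adjugate_inv_mul_mul {n : Type*} [Fintype n] [DecidableEq n] {K : Type*} [Field K]
    {S T : Matrix n n K} (hS : S.det ≠ 0) (hT : T.det ≠ 0) (F : Matrix n n K) :
    (S⁻¹ * F * T).adjugate = (T.det / S.det) • (T⁻¹ * F.adjugate * S) := by
  have adjugate_eq : ∀ {M : Matrix n n K}, M.det ≠ 0 → M.adjugate = M.det • M⁻¹ := fun hM => by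
    rw [inv_def, smul_smul, Ring.inverse_eq_inv, mul_inv_cancel₀ hM, one_smul]
  have hS' : S⁻¹.det ≠ 0 := by simpa using hS
  rw [adjugate_mul_distrib, adjugate_mul_distrib, adjugate_eq hT, adjugate_eq hS',
    det_nonsing_inv, Ring.inverse_eq_inv, nonsing_inv_nonsing_inv _ (isUnit_iff_ne_zero.2 hS)]
  simp only [Matrix.smul_mul, Matrix.mul_smul, smul_smul, Matrix.mul_assoc, div_eq_mul_inv,
    mul_comm]

lemma trace_transpose_mul_mul_mono {m n : Type*} [Fintype m] [Fintype n]
    {A B : Matrix n n ℝ} (h : A ≤ B) (X : Matrix n m ℝ) :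
    trace (Xᵀ * A * X) ≤ trace (Xᵀ * B * X) := by
  rw [← sub_nonneg, ← trace_sub, ← Matrix.sub_mul, ← Matrix.mul_sub]
  simpa using ((le_iff.1 h).conjTranspose_mul_mul_same X).trace_nonneg

lemma trace_transpose_mul_algebraMap_mul {m n : Type*} [Fintype m] [Fintype n] [DecidableEq n]
    (c : ℝ) (X : Matrix n m ℝ) :
    trace (Xᵀ * algebraMap ℝ (Matrix n n ℝ) c * X) = c * trace (Xᵀ * X) := by
  rw [Algebra.algebraMap_eq_smul_one, Matrix.mul_smul, Matrix.mul_one, Matrix.smul_mul,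
    trace_smul, smul_eq_mul]

section Frobenius

lemma frobNorm_nonneg (M : Matrix (Fin 3) (Fin 3) ℝ) : 0 ≤ frobNorm M := Real.sqrt_nonneg _

lemma sq_frobNorm (M : Matrix (Fin 3) (Fin 3) ℝ) : frobNorm M ^ 2 = trace (Mᵀ * M) :=
  Real.sq_sqrt (posSemidef_conjTranspose_mul_self M).trace_nonneg

lemma frobNorm_smul (r : ℝ) (M : Matrix (Fin 3) (Fin 3) ℝ) :
    frobNorm (r • M) = |r| * frobNorm M := by
  rw [frobNorm, frobNorm, transpose_smul, smul_mul_smul_comm, trace_smul, smul_eq_mul,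
    Real.sqrt_mul (mul_self_nonneg r), Real.sqrt_mul_self_eq_abs]

variable {L : Matrix (Fin 3) (Fin 3) ℝ}

lemma mul_sq_frobNorm_le_sq_frobNorm_mul_sqrt (hL : 0 ≤ L) {c : ℝ} (hc : algebraMap ℝ _ c ≤ L)
    (N : Matrix (Fin 3) (Fin 3) ℝ) : c * frobNorm N ^ 2 ≤ frobNorm (N * CFC.sqrt L) ^ 2 := by
  have key := trace_transpose_mul_mul_mono hc Nᵀ
  rw [trace_transpose_mul_algebraMap_mul, transpose_transpose, trace_mul_comm] at key
  set S := CFC.sqrt L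
  have hNS : trace ((N * S)ᵀ * (N * S)) = trace (N * L * Nᵀ) :=
    calc trace ((N * S)ᵀ * (N * S)) = trace ((S * Nᵀ) * (N * S)) := by
          rw [transpose_mul, transpose_sqrt]
      _ = trace ((N * S) * (S * Nᵀ)) := trace_mul_comm _ _
      _ = trace (N * (S * S) * Nᵀ) := by simp only [Matrix.mul_assoc]
      _ = trace (N * L * Nᵀ) := by rw [CFC.sqrt_mul_sqrt_self L hL]
  rwa [sq_frobNorm, sq_frobNorm, hNS]

lemma sq_frobNorm_sqrt_mul_le (hL : 0 ≤ L) {c : ℝ} (hc : L ≤ algebraMap ℝ _ c)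
    (Y : Matrix (Fin 3) (Fin 3) ℝ) : frobNorm (CFC.sqrt L * Y) ^ 2 ≤ c * frobNorm Y ^ 2 := by
  have key := trace_transpose_mul_mul_mono hc Y
  rw [trace_transpose_mul_algebraMap_mul] at key
  rwa [sq_frobNorm, sq_frobNorm, transpose_mul, transpose_sqrt, Matrix.mul_assoc,
    ← Matrix.mul_assoc (CFC.sqrt L), CFC.sqrt_mul_sqrt_self L hL, ← Matrix.mul_assoc]

end Frobenius

theorem mul_frobNorm_adjugate_le_mul_frobNorm_adjugate_conj {L L0 : Matrix (Fin 3) (Fin 3) ℝ}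
    (hL : L.PosDef) (hL0 : L0.PosDef) {α β : ℝ} (hα : 0 ≤ α) (hαL0 : algebraMap ℝ _ α ≤ L0)
    (hLβ : L ≤ algebraMap ℝ _ β) (F : Matrix (Fin 3) (Fin 3) ℝ) :
    α * frobNorm F.adjugate ≤ β * frobNorm ((CFC.sqrt L)⁻¹ * F * CFC.sqrt L0).adjugate := by
  set S := CFC.sqrt L
  set S0 := CFC.sqrt L0
  set N := F.adjugate
  set Y := S0⁻¹ * N * S
  have hS : 0 < S.det := det_sqrt_pos hL
  have hS0 : 0 < S0.det := det_sqrt_pos hL0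
  have hβ : 0 ≤ β := (hL.eigenvalues_pos 0).le.trans (hL.1.le_algebraMap_iff.1 hLβ 0)
  have hNS : N * S = S0 * Y := by
    rw [← Matrix.mul_assoc, ← Matrix.mul_assoc, mul_nonsing_inv _ (isUnit_iff_ne_zero.2 hS0.ne'),
      Matrix.one_mul]
  have hlow := mul_sq_frobNorm_le_sq_frobNorm_mul_sqrt hL.posSemidef.nonneg
    ((algebraMap_le_iff_le_lMin hL.1).2 le_rfl) N
  have hhigh := sq_frobNorm_sqrt_mul_le hL0.posSemidef.nonneg
    ((le_algebraMap_iff_lMax_le hL0.1).2 le_rfl) Y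
  have hdetL := det_le_lMin_mul_sq hL.posSemidef hLβ
  have hdetL0 := lMax_mul_sq_le_det hL0.1 hα hαL0
  have key : (α * S.det * frobNorm N) ^ 2 ≤ (β * S0.det * frobNorm Y) ^ 2 :=
    calc (α * S.det * frobNorm N) ^ 2 = α ^ 2 * L.det * frobNorm N ^ 2 := by
          rw [← sq_det_sqrt hL.posSemidef.nonneg]; ring
      _ ≤ α ^ 2 * (lMin hL.1 * β ^ 2) * frobNorm N ^ 2 := by gcongr
      _ = α ^ 2 * β ^ 2 * (lMin hL.1 * frobNorm N ^ 2) := by ring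
      _ ≤ α ^ 2 * β ^ 2 * (lMax hL0.1 * frobNorm Y ^ 2) :=
          mul_le_mul_of_nonneg_left (hlow.trans (hNS ▸ hhigh)) (by positivity)
      _ = β ^ 2 * (lMax hL0.1 * α ^ 2) * frobNorm Y ^ 2 := by ring
      _ ≤ β ^ 2 * L0.det * frobNorm Y ^ 2 := by gcongr
      _ = (β * S0.det * frobNorm Y) ^ 2 := by
          rw [← sq_det_sqrt hL0.posSemidef.nonneg]; ring
  have hY : α * S.det * frobNorm N ≤ β * S0.det * frobNorm Y :=
    (le_abs_self _).trans (abs_le_of_sq_le_sq key (by have := frobNorm_nonneg Y; positivity))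
  rw [adjugate_inv_mul_mul hS.ne' hS0.ne', frobNorm_smul, abs_of_pos (div_pos hS0 hS)]
  calc α * frobNorm N = α * S.det * frobNorm N / S.det := by
        rw [mul_right_comm, mul_div_cancel_right₀ _ hS.ne']
    _ ≤ β * S0.det * frobNorm Y / S.det := by gcongr
    _ = β * (S0.det / S.det * frobNorm Y) := by ring

lemma algebraMap_mul_add (a b c : ℝ) {n : Type*} [Fintype n] [DecidableEq n] :
    algebraMap ℝ (Matrix n n ℝ) (a * (c + b)) = a • (algebraMap ℝ _ c + b • 1) := by
  simp only [Algebra.algebraMap_eq_smul_one, ← add_smul, smul_smul]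

theorem stmt9_general (ε a0 : ℝ) (hε : 0 < ε) (ha0 : 0 < a0)
    (Q Q0 L L0 F : Matrix (Fin 3) (Fin 3) ℝ)
    (hQ : Q.IsHermitian) (htrQ : Q.trace = 0) (hminQ : -1 / 3 + ε ≤ lMin hQ)
    (hQ0 : Q0.IsHermitian) (hminQ0 : -1 / 3 + ε ≤ lMin hQ0)
    (hLdef : L = a0 • (Q + (1 / 3 : ℝ) • (1 : Matrix (Fin 3) (Fin 3) ℝ)))
    (hL0def : L0 = a0 • (Q0 + (1 / 3 : ℝ) • (1 : Matrix (Fin 3) (Fin 3) ℝ)))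
    (hL : L.PosDef) (hL0 : L0.PosDef) :
    (ε / 3) * frobNorm F.adjugate ≤
      frobNorm ((msqrt hL)⁻¹ * F * msqrt hL0).adjugate := by
  have hLβ : L ≤ algebraMap ℝ _ (a0 * (1 - 2 * ε)) := by
    rw [show 1 - 2 * ε = -2 * (-1 / 3 + ε) + 1 / 3 by ring, algebraMap_mul_add, hLdef]
    gcongr
    exact le_algebraMap_of_trace_eq_zero hQ htrQ hminQ
  have hL0α : algebraMap ℝ _ (a0 * ε) ≤ L0 := by
    rw [show ε = -1 / 3 + ε + 1 / 3 by ring, algebraMap_mul_add, hL0def]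
    gcongr
    exact (algebraMap_le_iff_le_lMin hQ0).2 hminQ0
  have key := mul_frobNorm_adjugate_le_mul_frobNorm_adjugate_conj hL hL0
    (mul_pos ha0 hε).le hL0α hLβ F
  rw [msqrt_eq_sqrt, msqrt_eq_sqrt]
  set N := frobNorm F.adjugate
  set G := frobNorm ((CFC.sqrt L)⁻¹ * F * CFC.sqrt L0).adjugate
  have hN : 0 ≤ N := frobNorm_nonneg _
  have hG : 0 ≤ G := frobNorm_nonneg _
  have hNG : ε * N ≤ (1 - 2 * ε) * G :=
    le_of_mul_le_mul_left (by simpa only [mul_assoc] using key) ha0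
  nlinarith [mul_nonneg hε.le hN, mul_nonneg hε.le hG]

theorem stmt9 (ε a0 : ℝ) (hε : 0 < ε) (hε3 : ε ≤ 1 / 3) (ha0 : 0 < a0)
    (Q Q0 L L0 F : Matrix (Fin 3) (Fin 3) ℝ)
    (hQ : Q.IsHermitian) (htrQ : Q.trace = 0) (hminQ : -1 / 3 + ε ≤ lMin hQ)
    (hQ0 : Q0.IsHermitian) (htrQ0 : Q0.trace = 0) (hminQ0 : -1 / 3 + ε ≤ lMin hQ0)
    (hLdef : L = a0 • (Q + (1 / 3 : ℝ) • (1 : Matrix (Fin 3) (Fin 3) ℝ)))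
    (hL0def : L0 = a0 • (Q0 + (1 / 3 : ℝ) • (1 : Matrix (Fin 3) (Fin 3) ℝ)))
    (hL : L.PosDef) (hL0 : L0.PosDef) (hF : IsUnit F.det) :
    (ε / 3) * frobNorm F.adjugate ≤
      frobNorm ((msqrt hL)⁻¹ * F * msqrt hL0).adjugate :=
  stmt9_general ε a0 hε ha0 Q Q0 L L0 F hQ htrQ hminQ hQ0 hminQ0 hLdef hL0def hL hL0
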